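/- For k = 2, q ≥ 2, 1 ≤ m ≤ q-1 and θ > 1, a positive real z ≠ 1 satisfies z = f_m(z) := ((θ+m-1)z + q-m)²/(mz + q-m-1+θ)² if and only if x = √z satisfies m x² - (θ-1) x + (q-m) = 0. -/
import Mathlib


theorem potts_fixed_point_iff_quadratic (θ : ℝ) (hθ : 1 < θ) (q m : ℕ)
    (hq : 2 ≤ q) (hm1 : 1 ≤ m) (hm2 : m ≤ q - 1) (z : ℝ) (hz : 0 < z) (hz1 : z ≠ 1) :
    (z = ((θ + m - 1) * z + ((q:ℝ) - m))^2 / ((m:ℝ) * z + ((q:ℝ) - m - 1) + θ)^2) ↔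
    (m:ℝ) * (Real.sqrt z)^2 - (θ - 1) * Real.sqrt z + ((q:ℝ) - m) = 0 := by
  have hm1' : (1:ℝ) ≤ m := by exact_mod_cast hm1
  have hmq : (m:ℝ) + 1 ≤ q := by exact_mod_cast (by omega : m + 1 ≤ q)
  set x := Real.sqrt z with hxdef
  have hx : 0 < x := Real.sqrt_pos.mpr hz
  have hx2 : x ^ 2 = z := Real.sq_sqrt hz.le
  have hx1 : x ≠ 1 := by
    intro h
    apply hz1
    rw [← hx2, h]; ring
  have hA : 0 < (θ + m - 1) * z + ((q:ℝ) - m) := by nlinarith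
  have hB : 0 < (m:ℝ) * z + ((q:ℝ) - m - 1) + θ := by nlinarith
  rw [eq_div_iff (by positivity)]
  constructor
  · intro h
    have hfac : (x * ((m:ℝ) * z + ((q:ℝ) - m - 1) + θ)
        - ((θ + m - 1) * z + ((q:ℝ) - m)))
        * (x * ((m:ℝ) * z + ((q:ℝ) - m - 1) + θ)
        + ((θ + m - 1) * z + ((q:ℝ) - m))) = 0 := by
      linear_combination ((m:ℝ) * z + ((q:ℝ) - m - 1) + θ) ^ 2 * hx2 + h
    have hsum : 0 < x * ((m:ℝ) * z + ((q:ℝ) - m - 1) + θ)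
        + ((θ + m - 1) * z + ((q:ℝ) - m)) := by positivity
    have key : x * ((m:ℝ) * z + ((q:ℝ) - m - 1) + θ)
        = (θ + m - 1) * z + ((q:ℝ) - m) := by
      rcases mul_eq_zero.mp hfac with h1 | h1
      · linarith
      · linarith
    have hfac2 : (x - 1) * ((m:ℝ) * x ^ 2 - (θ - 1) * x + ((q:ℝ) - m)) = 0 := by
      linear_combination key + ((m:ℝ) * x - (θ + m - 1)) * hx2
    rcases mul_eq_zero.mp hfac2 with h1 | h1
    · exact absurd (by linarith : x = 1) hx1
    · exact h1
  · intro hQ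
    have key : x * ((m:ℝ) * z + ((q:ℝ) - m - 1) + θ)
        = (θ + m - 1) * z + ((q:ℝ) - m) := by
      linear_combination (x - 1) * hQ - ((m:ℝ) * x - (θ + m - 1)) * hx2
    linear_combination (x * ((m:ℝ) * z + ((q:ℝ) - m - 1) + θ)
      + ((θ + m - 1) * z + ((q:ℝ) - m))) * key
      - ((m:ℝ) * z + ((q:ℝ) - m - 1) + θ) ^ 2 * hx2
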